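/- arXiv:1409.2811 — 4 statements merged into one kernel-verified Lean document; each statement's English description precedes it below -/
import Mathlib

section
/- Let W : ℝ^d → ℝ satisfy assumptions (A0)–(A2) and let ρ be a nonnegative finite Borel measure on ℝ^d. Then the velocity field â_ρ satisfies the one-sided Lipschitz estimate: for all x, y ∈ ℝ^d, (â_ρ(x) − â_ρ(y)) · (x − y) ≤ −λ ρ(ℝ^d) |x − y|². -/
open MeasureTheory Filter Metric
open scoped RealInnerProductSpace Topology BigOperators NNReal ENNReal Classical

noncomputable section

/-- The extended gradient `∇̂W`: `∇W(x)` for `x ≠ 0` and `0` at the origin. -/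
def hatGrad (d : ℕ) (W : EuclideanSpace ℝ (Fin d) → ℝ) (x : EuclideanSpace ℝ (Fin d)) :
    EuclideanSpace ℝ (Fin d) :=
  if x = 0 then 0 else gradient W x

/-- Assumptions (A0)-(A2): `W` is Lipschitz with constant `winf ≥ 0`, even, `W 0 = 0`,
`lam`-convex for some `lam ≤ 0`, continuously differentiable away from the origin,
with gradient bounded by `winf` away from the origin. -/
structure PointyPotential (d : ℕ) (W : EuclideanSpace ℝ (Fin d) → ℝ) (winf lam : ℝ) : Prop where
  winf_nonneg : 0 ≤ winf
  lipschitz : LipschitzWith (Real.toNNReal winf) W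
  even : ∀ x, W (-x) = W x
  zero_val : W 0 = 0
  lam_nonpos : lam ≤ 0
  lamConvex : ConvexOn ℝ Set.univ fun x => W x - lam / 2 * ‖x‖ ^ 2
  diffAway : ∀ x : EuclideanSpace ℝ (Fin d), x ≠ 0 → DifferentiableAt ℝ W x
  gradContinuous : ContinuousOn (gradient W) {x : EuclideanSpace ℝ (Fin d) | x ≠ 0}
  gradBound : ∀ x : EuclideanSpace ℝ (Fin d), x ≠ 0 → ‖gradient W x‖ ≤ winf

/-- The velocity field `â_ρ(x) = −∫ ∇̂W(x − y) ρ(dy)`. -/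
def aHat (d : ℕ) (W : EuclideanSpace ℝ (Fin d) → ℝ) (μ : Measure (EuclideanSpace ℝ (Fin d)))
    (x : EuclideanSpace ℝ (Fin d)) : EuclideanSpace ℝ (Fin d) :=
  -∫ y, hatGrad d W (x - y) ∂μ

/-!
The function `V x = W x - lam / 2 * ‖x‖ ^ 2` is convex, and `∇̂W a - lam • a` is a subgradient
of `V` at every `a`: away from the origin it is the gradient of `V`, and at the origin it is `0`,
which is a subgradient because an even convex function is minimal at `0`. Subgradients of a
convex function form a monotone map, so `lam * ‖a - b‖ ^ 2 ≤ ⟪∇̂W a - ∇̂W b, a - b⟫`; taking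
`a = x - z`, `b = y - z` and integrating in `z` against `ρ` gives the estimate.
-/

theorem ConvexOn.apply_zero_le_of_even {F : Type*} [AddCommGroup F] [Module ℝ F] {f : F → ℝ}
    (hf : ConvexOn ℝ Set.univ f) (heven : ∀ x, f (-x) = f x) (z : F) : f 0 ≤ f z := by
  have hmid := hf.2 (Set.mem_univ z) (Set.mem_univ (-z)) (by norm_num : (0 : ℝ) ≤ 1 / 2)
    (by norm_num : (0 : ℝ) ≤ 1 / 2) (by norm_num)
  rw [smul_neg, add_neg_cancel, heven, smul_eq_mul] at hmid
  linarith

theorem ConvexOn.apply_sub_le_of_hasFDerivAt {F : Type*} [NormedAddCommGroup F]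
    [NormedSpace ℝ F] {f : F → ℝ} {f' : F →L[ℝ] ℝ} {x : F}
    (hf : ConvexOn ℝ Set.univ f) (hx : HasFDerivAt f f' x) (z : F) :
    f' (z - x) ≤ f z - f x := by
  have hline : HasDerivAt (fun t : ℝ => x + t • (z - x)) (z - x) 0 := by
    simpa using ((hasDerivAt_id (0 : ℝ)).smul_const (z - x)).const_add x
  have hderiv : HasDerivAt (fun t : ℝ => f (x + t • (z - x))) (f' (z - x)) 0 :=
    (by simpa using hx : HasFDerivAt f f' (x + (0 : ℝ) • (z - x))).comp_hasDerivAt 0 hline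
  have hconv : ConvexOn ℝ Set.univ (fun t : ℝ => f (x + t • (z - x))) := by
    simpa [Function.comp_def, AffineMap.lineMap_apply_module', add_comm] using
      hf.comp_affineMap (AffineMap.lineMap x z : ℝ →ᵃ[ℝ] F)
  simpa [slope] using hconv.le_slope_of_hasDerivAt (Set.mem_univ 0) (Set.mem_univ 1) one_pos hderiv

section Subgradient

variable {E : Type*} [NormedAddCommGroup E] [InnerProductSpace ℝ E]

def IsSubgradientAt (f : E → ℝ) (g x : E) : Prop :=
  ∀ z, f x + ⟪g, z - x⟫ ≤ f z

theorem IsSubgradientAt.inner_sub_nonneg {f : E → ℝ} {g h x y : E}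
    (hg : IsSubgradientAt f g x) (hh : IsSubgradientAt f h y) : 0 ≤ ⟪g - h, x - y⟫ := by
  have hgxy := hg y
  have hhyx := hh x
  have hg_swap : ⟪g, y - x⟫ = -⟪g, x - y⟫ := by rw [← inner_neg_right, neg_sub]
  rw [inner_sub_left]
  linarith

theorem ConvexOn.isSubgradientAt_of_hasGradientAt [CompleteSpace E] {f : E → ℝ} {g x : E}
    (hf : ConvexOn ℝ Set.univ f) (hx : HasGradientAt f g x) : IsSubgradientAt f g x := by
  intro z
  have := hf.apply_sub_le_of_hasFDerivAt (hasGradientAt_iff_hasFDerivAt.mp hx) z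
  rw [InnerProductSpace.toDual_apply_apply] at this
  linarith

end Subgradient

theorem inner_neg_integral_sub_neg_integral_le {E : Type*} [NormedAddCommGroup E]
    [InnerProductSpace ℝ E] [CompleteSpace E] [MeasurableSpace E] {μ : Measure E}
    [IsFiniteMeasure μ] {K : E → E} {lam : ℝ}
    (hK : ∀ a b, lam * ‖a - b‖ ^ 2 ≤ ⟪K a - K b, a - b⟫)
    (hKi : ∀ x, Integrable (fun y => K (x - y)) μ) (x y : E) :
    ⟪(-∫ z, K (x - z) ∂μ) - -∫ z, K (y - z) ∂μ, x - y⟫ ≤ -lam * μ.real Set.univ * ‖x - y‖ ^ 2 := by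
  have hdiff : Integrable (fun z => K (x - z) - K (y - z)) μ := (hKi x).sub (hKi y)
  have hpt : ∀ z, lam * ‖x - y‖ ^ 2 ≤ ⟪x - y, K (x - z) - K (y - z)⟫ := fun z => by
    simpa [real_inner_comm] using hK (x - z) (y - z)
  have hmono := integral_mono (integrable_const _) (hdiff.const_inner (x - y)) hpt
  rw [integral_const, smul_eq_mul, integral_inner hdiff, integral_sub (hKi x) (hKi y)] at hmono
  rw [neg_sub_neg, ← neg_sub, inner_neg_left, real_inner_comm]
  linarith

theorem measurable_hatGrad {d : ℕ} (W : EuclideanSpace ℝ (Fin d) → ℝ) :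
    Measurable (hatGrad d W) :=
  Measurable.ite (measurableSet_singleton 0) measurable_const
    ((InnerProductSpace.toDual ℝ _).symm.continuous.measurable.comp (measurable_fderiv ℝ W))

namespace PointyPotential

variable {d : ℕ} {W : EuclideanSpace ℝ (Fin d) → ℝ} {winf lam : ℝ}

theorem norm_hatGrad_le (hW : PointyPotential d W winf lam) (x : EuclideanSpace ℝ (Fin d)) :
    ‖hatGrad d W x‖ ≤ winf := by
  unfold hatGrad
  split_ifs with hx
  · simpa using hW.winf_nonneg
  · exact hW.gradBound x hx

theorem integrable_hatGrad_comp_sub (hW : PointyPotential d W winf lam)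
    (ρ : Measure (EuclideanSpace ℝ (Fin d))) [IsFiniteMeasure ρ] (x : EuclideanSpace ℝ (Fin d)) :
    Integrable (fun y => hatGrad d W (x - y)) ρ :=
  .of_bound ((measurable_hatGrad W).comp (measurable_const.sub measurable_id)).aestronglyMeasurable
    winf (ae_of_all _ fun _ => hW.norm_hatGrad_le _)

theorem isSubgradientAt_hatGrad (hW : PointyPotential d W winf lam) (a : EuclideanSpace ℝ (Fin d)) :
    IsSubgradientAt (fun x => W x - lam / 2 * ‖x‖ ^ 2) (hatGrad d W a - lam • a) a := by
  by_cases ha : a = 0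
  · subst ha
    intro z
    have heven : ∀ x, W (-x) - lam / 2 * ‖-x‖ ^ 2 = W x - lam / 2 * ‖x‖ ^ 2 := fun x => by
      rw [hW.even, norm_neg]
    simpa [hatGrad] using hW.lamConvex.apply_zero_le_of_even heven z
  · refine hW.lamConvex.isSubgradientAt_of_hasGradientAt ?_
    rw [hatGrad, if_neg ha, hasGradientAt_iff_hasFDerivAt]
    refine ((hW.diffAway a ha).hasFDerivAt.sub
      ((hasStrictFDerivAt_norm_sq a).hasFDerivAt.const_mul (lam / 2))).congr_fderiv ?_
    ext v
    simp only [sub_apply, smul_apply,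
      InnerProductSpace.toDual_apply_apply, innerSL_apply_apply, inner_sub_left,
      real_inner_smul_left, inner_gradient_left, nsmul_eq_mul, smul_eq_mul]
    ring

theorem lam_mul_norm_sq_le_inner_hatGrad_sub (hW : PointyPotential d W winf lam)
    (a b : EuclideanSpace ℝ (Fin d)) :
    lam * ‖a - b‖ ^ 2 ≤ ⟪hatGrad d W a - hatGrad d W b, a - b⟫ := by
  have := (hW.isSubgradientAt_hatGrad a).inner_sub_nonneg (hW.isSubgradientAt_hatGrad b)
  rw [sub_sub_sub_comm, ← smul_sub, inner_sub_left, real_inner_smul_left,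
    real_inner_self_eq_norm_sq] at this
  linarith

end PointyPotential

/-- for `W` satisfying (A0)-(A2) and `ρ` a nonnegative finite Borel measure,
the velocity field `â_ρ` satisfies the one-sided Lipschitz estimate
`(â_ρ(x) − â_ρ(y)) · (x − y) ≤ −λ ρ(ℝ^d) |x − y|²`. -/
theorem aHat_one_sided_lipschitz
    {d : ℕ} (W : EuclideanSpace ℝ (Fin d) → ℝ) (winf lam : ℝ)
    (hW : PointyPotential d W winf lam)
    (ρ : Measure (EuclideanSpace ℝ (Fin d))) [IsFiniteMeasure ρ] :
    ∀ x y : EuclideanSpace ℝ (Fin d),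
      ⟪aHat d W ρ x - aHat d W ρ y, x - y⟫ ≤ -lam * (ρ Set.univ).toReal * ‖x - y‖ ^ 2 :=
  inner_neg_integral_sub_neg_integral_le hW.lam_mul_norm_sq_le_inner_hatGrad_sub
    (hW.integrable_hatGrad_comp_sub ρ)
end
end

section
/- Let W : ℝ^d → ℝ satisfy assumptions (A0)–(A2). Let (ρ_n) be a sequence in 𝒫₂(ℝ^d) converging narrowly to ρ (i.e. ∫ f dρ_n → ∫ f dρ for every bounded continuous f). Then for Lebesgue-almost every x ∈ ℝ^d, lim_{n→∞} ∫_{{y : y ≠ x}} ∇W(x − y) ρ_n(dy) = ∫_{{y : y ≠ x}} ∇W(x − y) ρ(dy). -/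
open MeasureTheory Filter Metric
open scoped RealInnerProductSpace Topology BigOperators NNReal ENNReal Classical

noncomputable section

/-! For almost every `x` (all but the countably many atoms of `ρ`), the integrand
`y ↦ ∇̂W(x - y)` is bounded and continuous except at the single `ρ`-null point `y = x`.
Multiplying it by a continuous cutoff that vanishes at `x` and equals `1` outside a small ball
gives a bounded continuous function, whose integrals converge by narrow convergence; the error
is controlled by the mass of the ball, which is small for `ρ` and, by the portmanteau theorem,
eventually for every `ρ_n`. -/

open scoped BoundedContinuousFunction

theorem MeasureTheory.ProbabilityMeasure.tendsto_integral_of_tendsto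
    {X E ι : Type*} [TopologicalSpace X] [MeasurableSpace X] [OpensMeasurableSpace X]
    [NormedAddCommGroup E] [NormedSpace ℝ E] [FiniteDimensional ℝ E]
    [MeasurableSpace E] [BorelSpace E] {L : Filter ι}
    {μs : ι → ProbabilityMeasure X} {μ : ProbabilityMeasure X} (hμ : Tendsto μs L (𝓝 μ))
    (f : X →ᵇ E) :
    Tendsto (fun i => ∫ x, f x ∂(μs i : Measure X)) L (𝓝 (∫ x, f x ∂(μ : Measure X))) := by
  set e := (Module.finBasis ℝ E).equivFunL
  suffices h : Tendsto (fun i => e (∫ x, f x ∂(μs i : Measure X))) L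
      (𝓝 (e (∫ x, f x ∂(μ : Measure X)))) from
    e.toHomeomorph.isInducing.tendsto_nhds_iff.2 h
  refine tendsto_pi_nhds.2 fun j => ?_
  set ℓ : E →L[ℝ] ℝ := (ContinuousLinearMap.proj j).comp (e : E →L[ℝ] (Fin _ → ℝ))
  have hℓ (ν : Measure X) [IsFiniteMeasure ν] :
      e (∫ x, f x ∂ν) j = ∫ x, ℓ.compLeftContinuousBounded X f x ∂ν :=
    (ℓ.integral_comp_comm (f.integrable ν)).symm
  simpa only [hℓ] using ProbabilityMeasure.tendsto_iff_forall_integral_tendsto.1 hμ _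

section Cutoff

variable {X E : Type*} [NormedAddCommGroup E] [NormedSpace ℝ E]

theorem continuous_smul_of_continuousOn_compl_singleton [TopologicalSpace X] [T1Space X]
    {φ : X → ℝ} {f : X → E} {x₀ : X} {C : ℝ} (hφ : Continuous φ) (hφx₀ : φ x₀ = 0)
    (hf : ContinuousOn f {x₀}ᶜ) (hfC : ∀ x, ‖f x‖ ≤ C) : Continuous fun x => φ x • f x := by
  refine continuous_iff_continuousAt.2 fun x => ?_
  rcases eq_or_ne x x₀ with rfl | hx
  · have hφ0 : Tendsto φ (𝓝 x) (𝓝 0) := hφx₀ ▸ hφ.tendsto x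
    simpa [ContinuousAt, hφx₀] using
      hφ0.zero_smul_isBoundedUnder_le (isBoundedUnder_of ⟨C, fun y => hfC y⟩)
  · exact hφ.continuousAt.smul (hf.continuousAt (isOpen_compl_singleton.mem_nhds hx))

theorem exists_boundedContinuous_eqOn_compl_closedBall [MetricSpace X] {f : X → E} {x₀ : X}
    {C : ℝ} (hf : ContinuousOn f {x₀}ᶜ) (hfC : ∀ x, ‖f x‖ ≤ C) {r : ℝ} (hr : 0 < r) :
    ∃ F : X →ᵇ E, (∀ x ∉ closedBall x₀ r, F x = f x) ∧ ∀ x, ‖f x - F x‖ ≤ C := by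
  set φ : X → ℝ := fun x => min 1 (dist x x₀ / r)
  have hφ0 (x : X) : 0 ≤ φ x := le_min zero_le_one (by positivity)
  have hφ1 (x : X) : φ x ≤ 1 := min_le_left _ _
  have hφ_off (x : X) (hx : x ∉ closedBall x₀ r) : φ x = 1 :=
    min_eq_left ((le_div_iff₀ hr).2 (by simpa using (not_le.1 hx).le))
  have hsmul_le {t : ℝ} (x : X) (ht₀ : 0 ≤ t) (ht₁ : t ≤ 1) : ‖t • f x‖ ≤ C := by
    rw [norm_smul, Real.norm_eq_abs, abs_of_nonneg ht₀]
    exact (mul_le_of_le_one_left (norm_nonneg _) ht₁).trans (hfC x)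
  refine ⟨.ofNormedAddCommGroup (fun x => φ x • f x)
    (continuous_smul_of_continuousOn_compl_singleton (by fun_prop) (by simp [φ]) hf hfC) C
    fun x => hsmul_le x (hφ0 x) (hφ1 x), fun x hx => by simp [hφ_off x hx], fun x => ?_⟩
  have hsub : f x - φ x • f x = (1 - φ x) • f x := by rw [sub_smul, one_smul]
  simpa [hsub] using hsmul_le x (by linarith [hφ1 x]) (by linarith [hφ0 x])

theorem norm_integral_sub_integral_le_of_eqOn_compl [MeasurableSpace X] {μ : Measure X}
    {f g : X → E} {s : Set X} {C : ℝ} (hf : Integrable f μ) (hg : Integrable g μ)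
    (hs : μ s < ∞) (hfg : ∀ x ∉ s, f x = g x) (hC : ∀ x ∈ s, ‖f x - g x‖ ≤ C) :
    ‖∫ x, f x ∂μ - ∫ x, g x ∂μ‖ ≤ C * μ.real s := by
  rw [← integral_sub hf hg,
    ← setIntegral_eq_integral_of_forall_compl_eq_zero fun x hx => sub_eq_zero.2 (hfg x hx)]
  exact norm_setIntegral_le_of_norm_le_const hs hC

end Cutoff

theorem exists_pos_measure_closedBall_lt {X : Type*} [MetricSpace X] [MeasurableSpace X]
    [OpensMeasurableSpace X] (μ : Measure X) [IsFiniteMeasure μ] {x₀ : X} (h : μ {x₀} = 0)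
    {ε : ℝ≥0∞} (hε : 0 < ε) : ∃ r > 0, μ (closedBall x₀ r) < ε := by
  have hlim := tendsto_measure_cthickening_of_isClosed (μ := μ)
    ⟨1, one_pos, measure_ne_top μ _⟩ (isClosed_singleton (x := x₀))
  rw [h] at hlim
  obtain ⟨r, hμr, hr⟩ := (((hlim.eventually (gt_mem_nhds hε)).filter_mono
    nhdsWithin_le_nhds).and (self_mem_nhdsWithin (s := Set.Ioi (0 : ℝ)))).exists
  exact ⟨r, hr, by rwa [← cthickening_singleton x₀ hr.le]⟩

theorem MeasureTheory.ProbabilityMeasure.tendsto_integral_of_continuousOn_compl_singleton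
    {X E ι : Type*} [MetricSpace X] [MeasurableSpace X] [OpensMeasurableSpace X]
    [NormedAddCommGroup E] [NormedSpace ℝ E] [FiniteDimensional ℝ E]
    [MeasurableSpace E] [BorelSpace E] {L : Filter ι}
    {μs : ι → ProbabilityMeasure X} {μ : ProbabilityMeasure X} (hμ : Tendsto μs L (𝓝 μ))
    {f : X → E} {x₀ : X} {C : ℝ} (hf : ContinuousOn f {x₀}ᶜ) (hfC : ∀ x, ‖f x‖ ≤ C)
    (hx₀ : (μ : Measure X) {x₀} = 0) :
    Tendsto (fun i => ∫ x, f x ∂(μs i : Measure X)) L (𝓝 (∫ x, f x ∂(μ : Measure X))) := by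
  have hC : 0 ≤ C := (norm_nonneg _).trans (hfC x₀)
  have hf_int (ν : Measure X) [IsFiniteMeasure ν] : Integrable f ν :=
    .of_bound (measurable_of_continuousOn_compl_singleton x₀ hf).aestronglyMeasurable C
      (.of_forall hfC)
  refine Metric.tendsto_nhds.2 fun ε hε => ?_
  set δ := ε / (2 * C + 2)
  have hδ : 0 < δ := by positivity
  have hδε : C * δ + δ + C * δ < ε := by
    have : (2 * C + 2) * δ = ε := mul_div_cancel₀ ε (by positivity)
    linarith
  obtain ⟨r, hr, hμr⟩ :=
    exists_pos_measure_closedBall_lt (μ : Measure X) hx₀ (ENNReal.ofReal_pos.2 hδ)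
  obtain ⟨F, hF_off, hF_sub⟩ := exists_boundedContinuous_eqOn_compl_closedBall hf hfC hr
  have hclose (ν : Measure X) [IsFiniteMeasure ν] (hν : ν (closedBall x₀ r) < .ofReal δ) :
      dist (∫ x, f x ∂ν) (∫ x, F x ∂ν) ≤ C * δ := by
    rw [dist_eq_norm]
    refine (norm_integral_sub_integral_le_of_eqOn_compl (hf_int ν) (F.integrable ν)
      (measure_lt_top _ _) (fun x hx => (hF_off x hx).symm) (fun x _ => hF_sub x)).trans ?_
    exact mul_le_mul_of_nonneg_left (ENNReal.toReal_lt_of_lt_ofReal hν).le hC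
  have hsmall : ∀ᶠ i in L, (μs i : Measure X) (closedBall x₀ r) < .ofReal δ :=
    eventually_lt_of_limsup_lt
      ((ProbabilityMeasure.limsup_measure_closed_le_of_tendsto hμ isClosed_closedBall).trans_lt hμr)
  have hmid := Metric.tendsto_nhds.1 (ProbabilityMeasure.tendsto_integral_of_tendsto hμ F) δ hδ
  filter_upwards [hsmall, hmid] with i hi hi'
  calc dist (∫ x, f x ∂(μs i : Measure X)) (∫ x, f x ∂(μ : Measure X))
      ≤ dist (∫ x, f x ∂(μs i : Measure X)) (∫ x, F x ∂(μs i : Measure X))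
        + dist (∫ x, F x ∂(μs i : Measure X)) (∫ x, F x ∂(μ : Measure X))
        + dist (∫ x, F x ∂(μ : Measure X)) (∫ x, f x ∂(μ : Measure X)) := dist_triangle4 _ _ _ _
    _ < C * δ + δ + C * δ := by
      rw [dist_comm (∫ x, F x ∂(μ : Measure X))]
      linarith [hclose (μs i) hi, hclose μ hμr]
    _ < ε := hδε

theorem ae_measure_singleton_eq_zero {X : Type*} [MeasurableSpace X] [MeasurableSingletonClass X]
    (μ : Measure X) [SFinite μ] (ν : Measure X) [NullSingletonClass ν] : ∀ᵐ x ∂ν, μ {x} = 0 := by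
  have hatoms : {x : X | 0 < μ {x}}.Countable := by
    simpa using Measure.countable_meas_level_set_pos (μ := μ) measurable_id
  simpa [ae_iff, pos_iff_ne_zero] using hatoms.measure_zero ν

section HatGrad

variable {d : ℕ} {W : EuclideanSpace ℝ (Fin d) → ℝ} {winf lam : ℝ}

theorem PointyPotential.norm_hatGrad_le_s3 (hW : PointyPotential d W winf lam)
    (z : EuclideanSpace ℝ (Fin d)) : ‖hatGrad d W z‖ ≤ winf := by
  by_cases hz : z = 0
  · simp [hatGrad, hz, hW.winf_nonneg]
  · simpa [hatGrad, hz] using hW.gradBound z hz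

theorem PointyPotential.continuousOn_hatGrad_sub (hW : PointyPotential d W winf lam)
    (x : EuclideanSpace ℝ (Fin d)) : ContinuousOn (fun y => hatGrad d W (x - y)) {x}ᶜ := by
  have hcont : ContinuousOn (hatGrad d W) {0}ᶜ :=
    hW.gradContinuous.congr fun z hz => if_neg hz
  exact hcont.comp (by fun_prop) fun y hy => sub_ne_zero.2 (Ne.symm hy)

theorem setIntegral_gradient_sub_eq_integral_hatGrad (μ : Measure (EuclideanSpace ℝ (Fin d)))
    (x : EuclideanSpace ℝ (Fin d)) :
    ∫ y in {y | y ≠ x}, gradient W (x - y) ∂μ = ∫ y, hatGrad d W (x - y) ∂μ := by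
  calc ∫ y in {y | y ≠ x}, gradient W (x - y) ∂μ
      = ∫ y in {y | y ≠ x}, hatGrad d W (x - y) ∂μ :=
        setIntegral_congr_fun (measurableSet_singleton x).compl fun y hy => by
          simp [hatGrad, sub_ne_zero.2 (Ne.symm hy)]
    _ = ∫ y, hatGrad d W (x - y) ∂μ :=
        setIntegral_eq_integral_of_forall_compl_eq_zero fun y hy => by simp_all [hatGrad]

end HatGrad

theorem velocity_stability_ae_general
    {d : ℕ} (W : EuclideanSpace ℝ (Fin d) → ℝ) (winf lam : ℝ)
    (hW : PointyPotential d W winf lam)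
    (ρn : ℕ → Measure (EuclideanSpace ℝ (Fin d)))
    (ρ : Measure (EuclideanSpace ℝ (Fin d)))
    (hρn : ∀ n, IsProbabilityMeasure (ρn n))
    (hρ : IsProbabilityMeasure ρ)
    (hnarrow : ∀ f : BoundedContinuousFunction (EuclideanSpace ℝ (Fin d)) ℝ,
      Tendsto (fun n => ∫ x, f x ∂(ρn n)) atTop (𝓝 (∫ x, f x ∂ρ))) :
    ∀ᵐ x ∂(volume : Measure (EuclideanSpace ℝ (Fin d))),
      Tendsto
        (fun n => ∫ y in {y : EuclideanSpace ℝ (Fin d) | y ≠ x}, gradient W (x - y) ∂(ρn n))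
        atTop
        (𝓝 (∫ y in {y : EuclideanSpace ℝ (Fin d) | y ≠ x}, gradient W (x - y) ∂ρ)) := by
  simp only [setIntegral_gradient_sub_eq_integral_hatGrad]
  rcases subsingleton_or_nontrivial (EuclideanSpace ℝ (Fin d)) with hE | hE
  · -- `d = 0`: `volume` is then a Dirac mass, but the integrand vanishes identically.
    have hzero (z : EuclideanSpace ℝ (Fin d)) : hatGrad d W z = 0 := by
      simp [hatGrad, Subsingleton.elim z 0]
    simp [hzero]
  let Ps (n : ℕ) : ProbabilityMeasure (EuclideanSpace ℝ (Fin d)) := ⟨ρn n, hρn n⟩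
  let P : ProbabilityMeasure (EuclideanSpace ℝ (Fin d)) := ⟨ρ, hρ⟩
  have hlim : Tendsto Ps atTop (𝓝 P) :=
    ProbabilityMeasure.tendsto_iff_forall_integral_tendsto.2 hnarrow
  filter_upwards [ae_measure_singleton_eq_zero ρ volume] with x hx
  exact ProbabilityMeasure.tendsto_integral_of_continuousOn_compl_singleton hlim
    (hW.continuousOn_hatGrad_sub x) (fun y => hW.norm_hatGrad_le_s3 (x - y)) hx

/-- if `ρ_n ∈ 𝒫₂(ℝ^d)` converge narrowly to `ρ`, then for Lebesgue-a.e. `x`,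
`∫_{y ≠ x} ∇W(x−y) ρ_n(dy) → ∫_{y ≠ x} ∇W(x−y) ρ(dy)`. -/
theorem velocity_stability_ae
    {d : ℕ} (W : EuclideanSpace ℝ (Fin d) → ℝ) (winf lam : ℝ)
    (hW : PointyPotential d W winf lam)
    (ρn : ℕ → Measure (EuclideanSpace ℝ (Fin d)))
    (ρ : Measure (EuclideanSpace ℝ (Fin d)))
    (hρn : ∀ n, IsProbabilityMeasure (ρn n))
    (hρn2 : ∀ n, Integrable (fun x => ‖x‖ ^ 2) (ρn n))
    (hρ : IsProbabilityMeasure ρ) (hρ2 : Integrable (fun x => ‖x‖ ^ 2) ρ)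
    (hnarrow : ∀ f : BoundedContinuousFunction (EuclideanSpace ℝ (Fin d)) ℝ,
      Tendsto (fun n => ∫ x, f x ∂(ρn n)) atTop (𝓝 (∫ x, f x ∂ρ))) :
    ∀ᵐ x ∂(volume : Measure (EuclideanSpace ℝ (Fin d))),
      Tendsto
        (fun n => ∫ y in {y : EuclideanSpace ℝ (Fin d) | y ≠ x}, gradient W (x - y) ∂(ρn n))
        atTop
        (𝓝 (∫ y in {y : EuclideanSpace ℝ (Fin d) | y ≠ x}, gradient W (x - y) ∂ρ)) :=
  velocity_stability_ae_general W winf lam hW ρn ρ hρn hρ hnarrow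
end
end

section
/- Let W_ε ∈ C¹(ℝ^d) be even (W_ε(−x) = W_ε(x)), λ-convex for some λ ≤ 0, and with |∇W_ε| bounded. Let T > 0, let ρ₀, ρ̃₀ ∈ 𝒫₂(ℝ^d), and let γ₀ be a Borel probability measure on ℝ^d × ℝ^d with marginals ρ₀ and ρ̃₀. Let X, X̃ : [0,T] × ℝ^d → ℝ^d be measurable maps, continuous in t, with X(0,x) = x and X̃(0,x) = x for all x, sup_{t∈[0,T]} ∫ |X(t,x)|² ρ₀(dx) < ∞ and sup_{t∈[0,T]} ∫ |X̃(t,x)|² ρ̃₀(dx) < ∞, and such that for every x, t ↦ X(t,x) is differentiable with ∂_t X(t,x) = −∫_{ℝ^d} ∇W_ε(X(t,x) − X(t,y)) ρ₀(dy) for all t, and t ↦ X̃(t,x) is differentiable with ∂_t X̃(t,x) = −∫_{ℝ^d} ∇W_ε(X̃(t,x) − X̃(t,y)) ρ̃₀(dy) for all t. Then the quantity I(t) = ∬_{ℝ^d×ℝ^d} |X(t,x₁) − X̃(t,x₂)|² γ₀(dx₁,dx₂) satisfies I(t) ≤ e^{−4λt} I(0) for all t ∈ [0,T]. -/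
/-!
Both velocity fields can be written as integrals against the one coupling `γ₀` through its
marginals, so `I'(t) = -2 ∬∬ ⟪Z(x), D(x, y)⟫ dγ₀(y) dγ₀(x)` with `Z(x) = X(t,x₁) - X̃(t,x₂)` and
`D(x, y) = ∇W(X(t,x₁) - X(t,y₁)) - ∇W(X̃(t,x₂) - X̃(t,y₂))`. As `∇W` is odd, `D` is antisymmetric,
so symmetrising in `(x, y)` replaces `Z(x)` by `(Z(x) - Z(y))/2`, and `Z(x) - Z(y)` is exactly
the increment of the arguments of `∇W` in `D`. The monotonicity `⟪∇W u - ∇W v, u - v⟫ ≥ λ‖u - v‖²`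
given by `λ`-convexity, together with `‖a - b‖² ≤ 2‖a‖² + 2‖b‖²` and `λ ≤ 0`, yields
`I' ≤ -4λ I`, and Grönwall's lemma concludes. Bounded velocities keep every trajectory within
`C T` of its starting point, which supplies the domination needed to differentiate under the
integral.
-/

open MeasureTheory Filter Metric
open scoped RealInnerProductSpace Topology BigOperators NNReal ENNReal Classical

noncomputable section

/-- `μ ∈ 𝒫₂(ℝ^d)`: a Borel probability measure with finite second moment. -/
def MemP2 {d : ℕ} (μ : Measure (EuclideanSpace ℝ (Fin d))) : Prop :=
  IsProbabilityMeasure μ ∧ Integrable (fun x => ‖x‖ ^ 2) μ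

theorem ConvexOn.apply_sub_le_sub_of_hasFDerivAt {E : Type*} [NormedAddCommGroup E]
    [NormedSpace ℝ E] {g : E → ℝ} (hg : ConvexOn ℝ Set.univ g) {g' : E →L[ℝ] ℝ} {a : E}
    (hga : HasFDerivAt g g' a) (b : E) : g' (b - a) ≤ g b - g a := by
  have hline : HasDerivAt (fun t : ℝ => a + t • (b - a)) (b - a) 0 := by
    simpa using ((hasDerivAt_id (0 : ℝ)).smul_const (b - a)).const_add a
  have hderiv : HasDerivAt (fun t : ℝ => g (a + t • (b - a))) (g' (b - a)) 0 :=
    hga.comp_hasDerivAt_of_eq 0 hline (by simp)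
  have hφ : ConvexOn ℝ Set.univ fun t : ℝ => g (a + t • (b - a)) := by
    simpa [Function.comp_def, AffineMap.lineMap_apply_module', add_comm] using
      hg.comp_affineMap (AffineMap.lineMap a b)
  simpa [slope_def_field] using
    hφ.le_slope_of_hasDerivAt (Set.mem_univ 0) (Set.mem_univ 1) zero_lt_one hderiv

theorem le_exp_mul_of_hasDerivAt_le_mul {f f' : ℝ → ℝ} {a b K : ℝ}
    (hf : ContinuousOn f (Set.Icc a b)) (hderiv : ∀ s ∈ Set.Ioo a b, HasDerivAt f (f' s) s)
    (hbound : ∀ s ∈ Set.Ioo a b, f' s ≤ K * f s) :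
    ∀ t ∈ Set.Icc a b, f t ≤ Real.exp (K * (t - a)) * f a := by
  have hJ (s : ℝ) (hs : s ∈ Set.Ioo a b) : HasDerivAt (fun s => Real.exp (-K * s) * f s)
      (Real.exp (-K * s) * (f' s - K * f s)) s :=
    (((hasDerivAt_id' s).const_mul (-K)).exp.mul (hderiv s hs)).congr_deriv (by ring)
  have hanti : AntitoneOn (fun s => Real.exp (-K * s) * f s) (Set.Icc a b) := by
    refine antitoneOn_of_deriv_nonpos (convex_Icc a b)
      ((continuous_const.mul continuous_id).rexp.continuousOn.mul hf) ?_ ?_ <;>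
      rw [interior_Icc]
    · exact fun s hs => (hJ s hs).differentiableAt.differentiableWithinAt
    · intro s hs
      rw [(hJ s hs).deriv]
      exact mul_nonpos_of_nonneg_of_nonpos (Real.exp_pos _).le (sub_nonpos.2 (hbound s hs))
  intro t ht
  have hle := hanti (Set.left_mem_Icc.2 (ht.1.trans ht.2)) ht ht.1
  calc f t = Real.exp (K * t) * (Real.exp (-K * t) * f t) := by
        rw [← mul_assoc, ← Real.exp_add]; ring_nf; simp
    _ ≤ Real.exp (K * t) * (Real.exp (-K * a) * f a) := by gcongr
    _ = Real.exp (K * (t - a)) * f a := by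
        rw [← mul_assoc, ← Real.exp_add]; ring_nf

theorem norm_le_norm_add_mul_of_hasDerivAt {E : Type*} [NormedAddCommGroup E] [NormedSpace ℝ E]
    {f f' : ℝ → E} {C T : ℝ} (hf : ∀ s ∈ Set.Icc 0 T, HasDerivAt f (f' s) s)
    (hf' : ∀ s ∈ Set.Icc 0 T, ‖f' s‖ ≤ C) {t : ℝ} (ht : t ∈ Set.Icc 0 T) :
    ‖f t‖ ≤ ‖f 0‖ + C * t := by
  have := norm_image_sub_le_of_norm_deriv_le_segment'
    (fun s hs => (hf s ⟨hs.1, hs.2.trans ht.2⟩).hasDerivWithinAt)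
    (fun s hs => hf' s ⟨hs.1, hs.2.le.trans ht.2⟩) t (Set.right_mem_Icc.2 ht.1)
  rw [sub_zero] at this
  linarith [norm_le_norm_add_norm_sub' (f t) (f 0)]

section Gradient

variable {E : Type*} [NormedAddCommGroup E] [InnerProductSpace ℝ E] [CompleteSpace E]

theorem ConvexOn.mul_norm_sub_sq_le_inner_gradient_sub {W : E → ℝ} {lam : ℝ}
    (hW : Differentiable ℝ W) (hconv : ConvexOn ℝ Set.univ fun x => W x - lam / 2 * ‖x‖ ^ 2)
    (u v : E) : lam * ‖u - v‖ ^ 2 ≤ ⟪gradient W u - gradient W v, u - v⟫ := by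
  have hg (x : E) : HasFDerivAt (fun y => W y - lam / 2 * ‖y‖ ^ 2)
      (fderiv ℝ W x - (lam / 2) • (2 • innerSL ℝ x)) x :=
    (hW x).hasFDerivAt.sub ((hasStrictFDerivAt_norm_sq x).hasFDerivAt.const_mul (lam / 2))
  have huv := hconv.apply_sub_le_sub_of_hasFDerivAt (hg u) v
  have hvu := hconv.apply_sub_le_sub_of_hasFDerivAt (hg v) u
  simp only [sub_apply, smul_apply, innerSL_apply_apply,
    smul_eq_mul, nsmul_eq_mul, Nat.cast_ofNat, ← inner_gradient_left] at huv hvu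
  rw [← neg_sub u v, inner_neg_right, inner_neg_right] at huv
  rw [← real_inner_self_eq_norm_sq, inner_sub_left, inner_sub_left]
  linear_combination huv + hvu

theorem Function.Even.gradient {W : E → ℝ} (hW : W.Even) : (gradient W).Odd := by
  intro x
  have h := (LinearIsometryEquiv.neg ℝ (E := E)).toContinuousLinearEquiv.comp_right_fderiv
    (f := W) (x := x)
  have hcomp : W ∘ (LinearIsometryEquiv.neg ℝ (E := E)).toContinuousLinearEquiv = W :=
    funext hW
  rw [hcomp] at h
  refine ext_inner_right ℝ fun v => ?_
  rw [inner_neg_left, inner_gradient_left, inner_gradient_left, h]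
  simp

end Gradient

section Integrals

variable {α : Type*} [MeasurableSpace α] {μ : Measure α}

theorem continuousOn_integral_norm_sq_of_le {E : Type*} [NormedAddCommGroup E]
    {Z : ℝ → α → E} {b : α → ℝ} {S : Set ℝ}
    (hZm : ∀ r ∈ S, AEStronglyMeasurable (Z r) μ) (hZc : ∀ p, ContinuousOn (Z · p) S)
    (hZb : ∀ r ∈ S, ∀ p, ‖Z r p‖ ≤ b p) (hb : MemLp b 2 μ) :
    ContinuousOn (fun r => ∫ p, ‖Z r p‖ ^ 2 ∂μ) S := by
  refine continuousOn_of_dominated (fun r hr => (hZm r hr).norm.pow 2)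
    (fun r hr => ae_of_all _ fun p => ?_) hb.integrable_sq
    (ae_of_all _ fun p => (hZc p).norm.pow 2)
  rw [norm_pow, norm_norm]
  exact pow_le_pow_left₀ (norm_nonneg _) (hZb r hr p) 2

variable {E : Type*} [NormedAddCommGroup E] [InnerProductSpace ℝ E]

theorem hasDerivAt_integral_norm_sq_of_le [IsFiniteMeasure μ] {Z V : ℝ → α → E} {b : α → ℝ}
    {M s : ℝ} {U : Set ℝ} (hU : U ∈ 𝓝 s) (hZm : ∀ r ∈ U, AEStronglyMeasurable (Z r) μ)
    (hVm : AEStronglyMeasurable (V s) μ) (hZ : ∀ r ∈ U, ∀ p, HasDerivAt (Z · p) (V r p) r)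
    (hZb : ∀ r ∈ U, ∀ p, ‖Z r p‖ ≤ b p) (hVb : ∀ r ∈ U, ∀ p, ‖V r p‖ ≤ M) (hb : MemLp b 2 μ) :
    HasDerivAt (fun r => ∫ p, ‖Z r p‖ ^ 2 ∂μ) (∫ p, 2 * ⟪Z s p, V s p⟫ ∂μ) s := by
  have hs : s ∈ U := mem_of_mem_nhds hU
  have hZs : Integrable (fun p => ‖Z s p‖ ^ 2) μ := by
    refine hb.integrable_sq.mono' ((hZm s hs).norm.pow 2) (ae_of_all _ fun p => ?_)
    rw [norm_pow, norm_norm]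
    exact pow_le_pow_left₀ (norm_nonneg _) (hZb s hs p) 2
  refine (hasDerivAt_integral_of_dominated_loc_of_deriv_le (bound := fun p => 2 * (b p * M)) hU
    (eventually_of_mem hU fun r hr => (hZm r hr).norm.pow 2) hZs
    (aestronglyMeasurable_const.mul ((hZm s hs).inner hVm))
    (ae_of_all _ fun p r hr => ?_) ((hb.integrable one_le_two).mul_const M |>.const_mul 2)
    (ae_of_all _ fun p r hr => (hZ r hr p).norm_sq)).2
  rw [norm_mul, Real.norm_two]
  gcongr
  exact (norm_inner_le_norm _ _).trans (mul_le_mul (hZb r hr p) (hVb r hr p) (norm_nonneg _)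
    ((norm_nonneg _).trans (hZb r hr p)))

theorem two_mul_integral_norm_sq_le_integral_integral_inner [IsProbabilityMeasure μ]
    {lam M : ℝ} (hlam : lam ≤ 0) {Z : α → E} (hZ : MemLp Z 2 μ) {D : α → α → E}
    (hDm : AEStronglyMeasurable (Function.uncurry D) (μ.prod μ)) (hDb : ∀ p q, ‖D p q‖ ≤ M)
    (hanti : ∀ p q, D q p = -D p q)
    (hmono : ∀ p q, lam * ‖Z p - Z q‖ ^ 2 ≤ ⟪D p q, Z p - Z q⟫) :
    2 * lam * ∫ p, ‖Z p‖ ^ 2 ∂μ ≤ ∫ p, ∫ q, ⟪Z p, D p q⟫ ∂μ ∂μ := by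
  set H : α × α → ℝ := fun r => ⟪Z r.1, D r.1 r.2⟫
  have hH : Integrable H (μ.prod μ) := by
    refine (((hZ.integrable one_le_two).norm.comp_fst μ).mul_const M).mono'
      (hZ.aestronglyMeasurable.comp_fst.inner hDm) (ae_of_all _ fun r => ?_)
    exact (norm_inner_le_norm _ _).trans (mul_le_mul_of_nonneg_left (hDb _ _) (norm_nonneg _))
  have hHswap : Integrable (fun r => H r.swap) (μ.prod μ) := hH.swap
  have hZsq : Integrable (fun p => ‖Z p‖ ^ 2) μ := hZ.integrable_norm_pow two_ne_zero
  have hsymm (r : α × α) : 2 * lam * (‖Z r.1‖ ^ 2 + ‖Z r.2‖ ^ 2) ≤ H r + H r.swap := by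
    have hHH : H r + H r.swap = ⟪D r.1 r.2, Z r.1 - Z r.2⟫ := by
      simp only [H, Prod.fst_swap, Prod.snd_swap, hanti r.1 r.2, inner_neg_right,
        inner_sub_right, real_inner_comm (Z r.1), real_inner_comm (Z r.2)]
      ring
    have hsq : ‖Z r.1 - Z r.2‖ ^ 2 ≤ 2 * (‖Z r.1‖ ^ 2 + ‖Z r.2‖ ^ 2) :=
      (pow_le_pow_left₀ (norm_nonneg _) (norm_sub_le _ _) 2).trans add_sq_le
    rw [hHH]
    nlinarith [hmono r.1 r.2]
  have hlhs : ∫ r, 2 * lam * (‖Z r.1‖ ^ 2 + ‖Z r.2‖ ^ 2) ∂μ.prod μ =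
      4 * lam * ∫ p, ‖Z p‖ ^ 2 ∂μ := by
    rw [integral_const_mul, integral_add (hZsq.comp_fst μ) (hZsq.comp_snd μ),
      integral_fun_fst (fun p => ‖Z p‖ ^ 2), integral_fun_snd (fun p => ‖Z p‖ ^ 2)]
    simp only [probReal_univ, one_smul]
    ring
  have hrhs : ∫ r, (H r + H r.swap) ∂μ.prod μ = 2 * ∫ p, ∫ q, ⟪Z p, D p q⟫ ∂μ ∂μ := by
    rw [integral_add hH hHswap, integral_prod_swap H, integral_prod H hH]
    ring
  have := integral_mono (((hZsq.comp_fst μ).add (hZsq.comp_snd μ)).const_mul (2 * lam))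
    (hH.add hHswap) hsymm
  simp only [Pi.add_apply] at this
  linarith

end Integrals

section InteractionVelocity

variable {E : Type*} [NormedAddCommGroup E] [NormedSpace ℝ E] [MeasurableSpace E]

/-- `-(G * X#μ)(X x)`, where `X#μ` is the push-forward of `μ` by `X`. -/
def interactionVelocity (G : E → E) (μ : Measure E) (X : E → E) (x : E) : E :=
  -∫ y, G (X x - X y) ∂μ

variable {G : E → E} {μ : Measure E} {X : E → E} {C : ℝ}

theorem norm_interactionVelocity_le [IsProbabilityMeasure μ] (hG : ∀ z, ‖G z‖ ≤ C) (x : E) :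
    ‖interactionVelocity G μ X x‖ ≤ C := by
  simpa [interactionVelocity] using
    norm_integral_le_of_norm_le_const (μ := μ) (ae_of_all _ fun y => hG (X x - X y))

variable [BorelSpace E] [SecondCountableTopology E]

theorem measurable_interactionVelocity [SFinite μ] (hG : Measurable G) (hX : Measurable X) :
    Measurable (interactionVelocity G μ X) :=
  ((hG.comp ((hX.comp measurable_fst).sub (hX.comp measurable_snd))).stronglyMeasurable
    |>.integral_prod_right' (ν := μ)).measurable.neg

theorem interactionVelocity_eq_integral_map {α : Type*} [MeasurableSpace α] {γ : Measure α}
    {π : α → E} (hπ : Measurable π) (hG : Measurable G) (hX : Measurable X) (x : E) :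
    interactionVelocity G (γ.map π) X x = -∫ q, G (X x - X (π q)) ∂γ := by
  rw [interactionVelocity, integral_map (f := fun y => G (X x - X y)) hπ.aemeasurable
    (hG.comp (measurable_const.sub hX)).aestronglyMeasurable]

end InteractionVelocity

section CoupledFlows

variable {E : Type*} [NormedAddCommGroup E] [InnerProductSpace ℝ E] [CompleteSpace E]
  [MeasurableSpace E] [BorelSpace E] [SecondCountableTopology E]
  {G : E → E} {lam C : ℝ}

theorem integral_inner_sub_interactionVelocity_le {γ : Measure (E × E)} [IsProbabilityMeasure γ]
    (hlam : lam ≤ 0) (hGm : Measurable G) (hGb : ∀ z, ‖G z‖ ≤ C) (hGodd : G.Odd)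
    (hGmono : ∀ u v, lam * ‖u - v‖ ^ 2 ≤ ⟪G u - G v, u - v⟫)
    {f g : E → E} (hf : Measurable f) (hg : Measurable g)
    (hZ : MemLp (fun p : E × E => f p.1 - g p.2) 2 γ) :
    ∫ p, 2 * ⟪f p.1 - g p.2, interactionVelocity G (γ.map Prod.fst) f p.1 -
        interactionVelocity G (γ.map Prod.snd) g p.2⟫ ∂γ ≤
      -4 * lam * ∫ p, ‖f p.1 - g p.2‖ ^ 2 ∂γ := by
  set D : E × E → E × E → E := fun p q => G (f p.1 - f q.1) - G (g p.2 - g q.2)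
  have hDm : Measurable (Function.uncurry D) :=
    (hGm.comp ((hf.comp (measurable_fst.comp measurable_fst)).sub
      (hf.comp (measurable_fst.comp measurable_snd)))).sub
    (hGm.comp ((hg.comp (measurable_snd.comp measurable_fst)).sub
      (hg.comp (measurable_snd.comp measurable_snd))))
  have hDb (p q : E × E) : ‖D p q‖ ≤ 2 * C :=
    (norm_sub_le _ _).trans (by linarith [hGb (f p.1 - f q.1), hGb (g p.2 - g q.2)])
  have hGf (p : E × E) : Integrable (fun q : E × E => G (f p.1 - f q.1)) γ :=
    .of_bound (hGm.comp (measurable_const.sub (hf.comp measurable_fst))).aestronglyMeasurable C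
      (ae_of_all _ fun q => hGb _)
  have hGg (p : E × E) : Integrable (fun q : E × E => G (g p.2 - g q.2)) γ :=
    .of_bound (hGm.comp (measurable_const.sub (hg.comp measurable_snd))).aestronglyMeasurable C
      (ae_of_all _ fun q => hGb _)
  have hrep (p : E × E) : 2 * ⟪f p.1 - g p.2, interactionVelocity G (γ.map Prod.fst) f p.1 -
      interactionVelocity G (γ.map Prod.snd) g p.2⟫ =
      -2 * ∫ q, ⟪f p.1 - g p.2, D p q⟫ ∂γ := by
    rw [interactionVelocity_eq_integral_map measurable_fst hGm hf,
      interactionVelocity_eq_integral_map measurable_snd hGm hg, neg_sub_neg,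
      ← integral_sub (hGg p) (hGf p), ← integral_inner (𝕜 := ℝ)
        (f := fun q : E × E => G (g p.2 - g q.2) - G (f p.1 - f q.1)) ((hGg p).sub (hGf p)),
      ← integral_const_mul, ← integral_const_mul]
    congr 1 with q
    rw [← neg_sub (G (f p.1 - f q.1)), inner_neg_right]
    ring
  have hsymm := two_mul_integral_norm_sq_le_integral_integral_inner hlam hZ
    hDm.aestronglyMeasurable hDb
    (fun p q => by
      simp only [D]
      rw [← neg_sub (f p.1), ← neg_sub (g p.2), hGodd, hGodd]
      abel)
    (fun p q => by
      rw [sub_sub_sub_comm]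
      exact hGmono _ _)
  rw [integral_congr_ae (ae_of_all _ hrep), integral_const_mul]
  linarith

theorem integral_norm_sub_sq_le_exp_of_interactionVelocity {T : ℝ} (hlam : lam ≤ 0)
    (hGm : Measurable G) (hGb : ∀ z, ‖G z‖ ≤ C) (hGodd : G.Odd)
    (hGmono : ∀ u v, lam * ‖u - v‖ ^ 2 ≤ ⟪G u - G v, u - v⟫)
    {ρ σ : Measure E} {γ : Measure (E × E)} [IsProbabilityMeasure γ]
    (hρ : γ.map Prod.fst = ρ) (hσ : γ.map Prod.snd = σ) {X Y : ℝ → E → E}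
    (hX : ∀ s, Measurable (X s)) (hY : ∀ s, Measurable (Y s))
    (hZ₀ : MemLp (fun p : E × E => X 0 p.1 - Y 0 p.2) 2 γ)
    (hXode : ∀ x, ∀ t ∈ Set.Icc 0 T,
      HasDerivAt (fun s => X s x) (interactionVelocity G ρ (X t) x) t)
    (hYode : ∀ x, ∀ t ∈ Set.Icc 0 T,
      HasDerivAt (fun s => Y s x) (interactionVelocity G σ (Y t) x) t) :
    ∀ t ∈ Set.Icc 0 T, ∫ p, ‖X t p.1 - Y t p.2‖ ^ 2 ∂γ ≤
      Real.exp (-4 * lam * t) * ∫ p, ‖X 0 p.1 - Y 0 p.2‖ ^ 2 ∂γ := by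
  subst hρ hσ
  have := Measure.isProbabilityMeasure_map (μ := γ) measurable_fst.aemeasurable
  have := Measure.isProbabilityMeasure_map (μ := γ) measurable_snd.aemeasurable
  set Z : ℝ → E × E → E := fun s p => X s p.1 - Y s p.2
  set V : ℝ → E × E → E := fun s p => interactionVelocity G (γ.map Prod.fst) (X s) p.1 -
    interactionVelocity G (γ.map Prod.snd) (Y s) p.2
  set b : E × E → ℝ := fun p => ‖Z 0 p‖ + 2 * C * T
  have hZm (s : ℝ) : Measurable (Z s) :=
    ((hX s).comp measurable_fst).sub ((hY s).comp measurable_snd)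
  have hVm (s : ℝ) : Measurable (V s) :=
    ((measurable_interactionVelocity hGm (hX s)).comp measurable_fst).sub
      ((measurable_interactionVelocity hGm (hY s)).comp measurable_snd)
  have hZV (p : E × E) : ∀ s ∈ Set.Icc 0 T, HasDerivAt (Z · p) (V s p) s :=
    fun s hs => (hXode p.1 s hs).sub (hYode p.2 s hs)
  have hVb (s : ℝ) (p : E × E) : ‖V s p‖ ≤ 2 * C := by
    have hVX := norm_interactionVelocity_le (μ := γ.map Prod.fst) (X := X s) hGb p.1
    have hVY := norm_interactionVelocity_le (μ := γ.map Prod.snd) (X := Y s) hGb p.2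
    exact (norm_sub_le _ _).trans (by linarith)
  have hZb : ∀ s ∈ Set.Icc 0 T, ∀ p, ‖Z s p‖ ≤ b p := fun s hs p => by
    have hC : 0 ≤ C := (norm_nonneg _).trans (hGb 0)
    have := norm_le_norm_add_mul_of_hasDerivAt (hZV p) (fun r _ => hVb r p) hs
    nlinarith [hs.2]
  have hb : MemLp b 2 γ := hZ₀.norm.add (memLp_const _)
  have hZL2 (s : ℝ) (hs : s ∈ Set.Icc 0 T) : MemLp (Z s) 2 γ :=
    hb.of_le (hZm s).aestronglyMeasurable
      (ae_of_all _ fun p => (hZb s hs p).trans (Real.le_norm_self _))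
  intro t ht
  simpa only [sub_zero] using le_exp_mul_of_hasDerivAt_le_mul
    (continuousOn_integral_norm_sq_of_le (fun r _ => (hZm r).aestronglyMeasurable)
      (fun p => HasDerivAt.continuousOn (hZV p)) hZb hb)
    (fun s hs => hasDerivAt_integral_norm_sq_of_le (Icc_mem_nhds hs.1 hs.2)
      (fun r _ => (hZm r).aestronglyMeasurable) (hVm s).aestronglyMeasurable
      (fun r hr p => hZV p r hr) hZb (fun r _ p => hVb r p) hb)
    (fun s hs => integral_inner_sub_interactionVelocity_le hlam hGm hGb hGodd hGmono
      (hX s) (hY s) (hZL2 s (Set.Ioo_subset_Icc_self hs))) t ht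

end CoupledFlows

theorem MemP2.memLp_of_map_eq {d : ℕ} {α : Type*} [MeasurableSpace α] {γ : Measure α}
    {μ : Measure (EuclideanSpace ℝ (Fin d))} (hμ : MemP2 μ) {π : α → EuclideanSpace ℝ (Fin d)}
    (hπ : Measurable π) (h : γ.map π = μ) : MemLp π 2 γ := by
  subst h
  exact (memLp_map_measure_iff aestronglyMeasurable_id hπ.aemeasurable).1
    ((memLp_two_iff_integrable_sq_norm aestronglyMeasurable_id).2 hμ.2)

theorem coupled_characteristics_contraction_general
    {d : ℕ} (Wε : EuclideanSpace ℝ (Fin d) → ℝ) (lam : ℝ) (hlam : lam ≤ 0)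
    (hsmooth : ContDiff ℝ 1 Wε) (heven : ∀ x, Wε (-x) = Wε x)
    (hconv : ConvexOn ℝ Set.univ fun x => Wε x - lam / 2 * ‖x‖ ^ 2)
    (hbound : ∃ C : ℝ, ∀ x, ‖gradient Wε x‖ ≤ C)
    (T : ℝ)
    (ρ₀ σ₀ : Measure (EuclideanSpace ℝ (Fin d))) (hρ₀ : MemP2 ρ₀) (hσ₀ : MemP2 σ₀)
    (γ₀ : Measure (EuclideanSpace ℝ (Fin d) × EuclideanSpace ℝ (Fin d)))
    (hγ₀ : IsProbabilityMeasure γ₀)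
    (hγ₀₁ : γ₀.map Prod.fst = ρ₀) (hγ₀₂ : γ₀.map Prod.snd = σ₀)
    (X Y : ℝ → EuclideanSpace ℝ (Fin d) → EuclideanSpace ℝ (Fin d))
    (hXmeas : Measurable fun p : ℝ × EuclideanSpace ℝ (Fin d) => X p.1 p.2)
    (hYmeas : Measurable fun p : ℝ × EuclideanSpace ℝ (Fin d) => Y p.1 p.2)
    (hX0 : ∀ x, X 0 x = x) (hY0 : ∀ x, Y 0 x = x)
    (hXode : ∀ x, ∀ t ∈ Set.Icc (0 : ℝ) T,
      HasDerivAt (fun s => X s x) (-∫ y, gradient Wε (X t x - X t y) ∂ρ₀) t)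
    (hYode : ∀ x, ∀ t ∈ Set.Icc (0 : ℝ) T,
      HasDerivAt (fun s => Y s x) (-∫ y, gradient Wε (Y t x - Y t y) ∂σ₀) t) :
    ∀ t ∈ Set.Icc (0 : ℝ) T,
      (∫ p, ‖X t p.1 - Y t p.2‖ ^ 2 ∂γ₀) ≤
        Real.exp (-4 * lam * t) * ∫ p, ‖X 0 p.1 - Y 0 p.2‖ ^ 2 ∂γ₀ := by
  obtain ⟨C, hC⟩ := hbound
  have hWε : Differentiable ℝ Wε := hsmooth.differentiable one_ne_zero
  have hgrad : Continuous (gradient Wε) :=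
    (InnerProductSpace.toDual ℝ _).symm.continuous.comp (hsmooth.continuous_fderiv one_ne_zero)
  have hZ₀ : MemLp (fun p => X 0 p.1 - Y 0 p.2) 2 γ₀ := by
    simp only [hX0, hY0]
    exact (hρ₀.memLp_of_map_eq measurable_fst hγ₀₁).sub (hσ₀.memLp_of_map_eq measurable_snd hγ₀₂)
  exact integral_norm_sub_sq_le_exp_of_interactionVelocity hlam hgrad.measurable hC
    (Function.Even.gradient heven) (hconv.mul_norm_sub_sq_le_inner_gradient_sub hWε) hγ₀₁ hγ₀₂
    (fun _ => hXmeas.comp measurable_prodMk_left) (fun _ => hYmeas.comp measurable_prodMk_left)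
    hZ₀ hXode hYode

/-- for a smooth even `λ`-convex interaction potential with bounded gradient,
the coupled characteristics satisfy
`I(t) = ∬ |X(t,x₁) − Y(t,x₂)|² γ₀(dx₁,dx₂) ≤ e^{−4λt} I(0)` on `[0,T]`. -/
theorem coupled_characteristics_contraction
    {d : ℕ} (Wε : EuclideanSpace ℝ (Fin d) → ℝ) (lam : ℝ) (hlam : lam ≤ 0)
    (hsmooth : ContDiff ℝ 1 Wε) (heven : ∀ x, Wε (-x) = Wε x)
    (hconv : ConvexOn ℝ Set.univ fun x => Wε x - lam / 2 * ‖x‖ ^ 2)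
    (hbound : ∃ C : ℝ, ∀ x, ‖gradient Wε x‖ ≤ C)
    (T : ℝ) (hT : 0 < T)
    (ρ₀ σ₀ : Measure (EuclideanSpace ℝ (Fin d))) (hρ₀ : MemP2 ρ₀) (hσ₀ : MemP2 σ₀)
    (γ₀ : Measure (EuclideanSpace ℝ (Fin d) × EuclideanSpace ℝ (Fin d)))
    (hγ₀ : IsProbabilityMeasure γ₀)
    (hγ₀₁ : γ₀.map Prod.fst = ρ₀) (hγ₀₂ : γ₀.map Prod.snd = σ₀)
    (X Y : ℝ → EuclideanSpace ℝ (Fin d) → EuclideanSpace ℝ (Fin d))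
    (hXmeas : Measurable fun p : ℝ × EuclideanSpace ℝ (Fin d) => X p.1 p.2)
    (hYmeas : Measurable fun p : ℝ × EuclideanSpace ℝ (Fin d) => Y p.1 p.2)
    (hXcont : ∀ x, ContinuousOn (fun t => X t x) (Set.Icc 0 T))
    (hYcont : ∀ x, ContinuousOn (fun t => Y t x) (Set.Icc 0 T))
    (hX0 : ∀ x, X 0 x = x) (hY0 : ∀ x, Y 0 x = x)
    (hXmom : ∃ C : ℝ, ∀ t ∈ Set.Icc (0 : ℝ) T, (∫ x, ‖X t x‖ ^ 2 ∂ρ₀) ≤ C)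
    (hYmom : ∃ C : ℝ, ∀ t ∈ Set.Icc (0 : ℝ) T, (∫ x, ‖Y t x‖ ^ 2 ∂σ₀) ≤ C)
    (hXode : ∀ x, ∀ t ∈ Set.Icc (0 : ℝ) T,
      HasDerivAt (fun s => X s x) (-∫ y, gradient Wε (X t x - X t y) ∂ρ₀) t)
    (hYode : ∀ x, ∀ t ∈ Set.Icc (0 : ℝ) T,
      HasDerivAt (fun s => Y s x) (-∫ y, gradient Wε (Y t x - Y t y) ∂σ₀) t) :
    ∀ t ∈ Set.Icc (0 : ℝ) T,
      (∫ p, ‖X t p.1 - Y t p.2‖ ^ 2 ∂γ₀) ≤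
        Real.exp (-4 * lam * t) * ∫ p, ‖X 0 p.1 - Y 0 p.2‖ ^ 2 ∂γ₀ :=
  coupled_characteristics_contraction_general Wε lam hlam hsmooth heven hconv hbound T ρ₀ σ₀ hρ₀ hσ₀
    γ₀ hγ₀ hγ₀₁ hγ₀₂ X Y hXmeas hYmeas hX0 hY0 hXode hYode

end
end

section
/- Let W : ℝ² → ℝ satisfy assumptions (A0)–(A2), let ρ^ini ∈ 𝒫₂(ℝ²), and consider the finite volume scheme with initial values ρ⁰_{ij} = (1/(ΔxΔy)) ρ^ini(C_{ij}). If the CFL condition w_∞ (1/Δx + 1/Δy) Δt ≤ 1/2 holds, then for all n ∈ ℕ and all i, j ∈ ℤ: ρ^n_{ij} ≥ 0, |a_x{}^n_{ij}| ≤ w_∞, and |a_y{}^n_{ij}| ≤ w_∞. -/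
open MeasureTheory Filter Metric
open scoped RealInnerProductSpace Topology BigOperators NNReal ENNReal Classical

noncomputable section

/-- The grid cell `C_{ij} = [iΔx,(i+1)Δx) × [jΔy,(j+1)Δy)` as a subset of `ℝ²`. -/
def cell2 (dx dy : ℝ) (i j : ℤ) : Set (EuclideanSpace ℝ (Fin 2)) :=
  {p : EuclideanSpace ℝ (Fin 2) |
    p 0 ∈ Set.Ico ((i : ℝ) * dx) (((i : ℝ) + 1) * dx) ∧
    p 1 ∈ Set.Ico ((j : ℝ) * dy) (((j : ℝ) + 1) * dy)}

/-- `D_cW_{ij}^{kl} = ∬_{C_{kl}} ∬_{C_{ij}} ∂̂_cW(p − q) dp dq`, where `c = 0` gives the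
`x`-component `∂̂_xW` and `c = 1` the `y`-component `∂̂_yW` of the extended gradient. -/
def DW (W : EuclideanSpace ℝ (Fin 2) → ℝ) (dx dy : ℝ) (c : Fin 2) (i j k l : ℤ) : ℝ :=
  ∫ q in cell2 dx dy k l, ∫ p in cell2 dx dy i j, hatGrad 2 W (p - q) c

/-- The discrete velocity `a_c{}_{ij} = (1/(ΔxΔy)) Σ_{k,ℓ} ρ_{kℓ} D_cW_{ij}^{kℓ}`. -/
def discVel (W : EuclideanSpace ℝ (Fin 2) → ℝ) (dx dy : ℝ) (ρ : ℤ → ℤ → ℝ) (c : Fin 2)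
    (i j : ℤ) : ℝ :=
  (1 / (dx * dy)) * ∑' k : ℤ, ∑' l : ℤ, ρ k l * DW W dx dy c i j k l

/-- One step of the finite volume scheme (Lax–Friedrichs type update rule). -/
def fvStep (W : EuclideanSpace ℝ (Fin 2) → ℝ) (winf dx dy dt : ℝ) (ρ : ℤ → ℤ → ℝ)
    (i j : ℤ) : ℝ :=
  let ax : ℤ → ℤ → ℝ := fun i j => discVel W dx dy ρ 0 i j
  let ay : ℤ → ℤ → ℝ := fun i j => discVel W dx dy ρ 1 i j
  -- half-index quantities: `axh i j = a_x{}_{i+1/2,j}`, `ρxh i j = ρ_{i+1/2,j}`, etc.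
  let axh : ℤ → ℤ → ℝ := fun i j => (ax i j + ax (i + 1) j) / 2
  let ayh : ℤ → ℤ → ℝ := fun i j => (ay i j + ay i (j + 1)) / 2
  let ρxh : ℤ → ℤ → ℝ := fun i j => (ρ i j + ρ (i + 1) j) / 2
  let ρyh : ℤ → ℤ → ℝ := fun i j => (ρ i j + ρ i (j + 1)) / 2
  ρ i j - (dt / dx) * (axh i j * ρxh i j - axh (i - 1) j * ρxh (i - 1) j)
        - (dt / dy) * (ayh i j * ρyh i j - ayh i (j - 1) * ρyh i (j - 1))
        + (dt * winf / (2 * dx)) * (ρ (i + 1) j - 2 * ρ i j + ρ (i - 1) j)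
        + (dt * winf / (2 * dy)) * (ρ i (j + 1) - 2 * ρ i j + ρ i (j - 1))

/-- The finite volume approximation `ρ^n_{ij}`, initialized by cell averages of `ρini`. -/
def fvRho (W : EuclideanSpace ℝ (Fin 2) → ℝ) (winf dx dy dt : ℝ)
    (ρini : Measure (EuclideanSpace ℝ (Fin 2))) : ℕ → ℤ → ℤ → ℝ
  | 0 => fun i j => (ρini (cell2 dx dy i j)).toReal / (dx * dy)
  | n + 1 => fun i j => fvStep W winf dx dy dt (fvRho W winf dx dy dt ρini n) i j

/-! Under the CFL condition, one step of the scheme writes `ρ^{n+1}_{ij}` as a combination of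
`ρ^n_{ij}` and its four neighbours with nonnegative coefficients, provided the interface
velocities are bounded by `w_∞`. Those velocities are bounded by `w_∞` as soon as `ρ^n` is
nonnegative with mass `ΔxΔy Σ ρ^n_{ij} ≤ 1`, because `|∇̂W| ≤ w_∞`. The scheme is in
conservation form, so the mass bound is propagated, and induction on `n` closes the loop. -/

open Set Function

theorem cell2_eq_preimage_pi (dx dy : ℝ) (i j : ℤ) :
    cell2 dx dy i j = WithLp.ofLp ⁻¹' univ.pi fun c : Fin 2 =>
      Ico (![(i : ℝ) * dx, (j : ℝ) * dy] c) (![((i : ℝ) + 1) * dx, ((j : ℝ) + 1) * dy] c) := by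
  ext p
  simp [cell2, Fin.forall_fin_two]

theorem measurableSet_cell2 (dx dy : ℝ) (i j : ℤ) : MeasurableSet (cell2 dx dy i j) := by
  rw [cell2_eq_preimage_pi]
  exact (MeasurableEquiv.toLp 2 (Fin 2 → ℝ)).symm.measurable
    (MeasurableSet.univ_pi fun _ => measurableSet_Ico)

theorem volume_cell2 (dx dy : ℝ) (i j : ℤ) :
    volume (cell2 dx dy i j) = ENNReal.ofReal dx * ENNReal.ofReal dy := by
  rw [cell2_eq_preimage_pi, (PiLp.volume_preserving_ofLp (Fin 2)).measure_preimage
    (MeasurableSet.univ_pi fun _ => measurableSet_Ico).nullMeasurableSet, Real.volume_pi_Ico,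
    Fin.prod_univ_two]
  congr 2 <;> simp <;> ring

theorem measureReal_cell2 {dx dy : ℝ} (hdx : 0 ≤ dx) (hdy : 0 ≤ dy) (i j : ℤ) :
    volume.real (cell2 dx dy i j) = dx * dy := by
  rw [measureReal_def, volume_cell2, ENNReal.toReal_mul, ENNReal.toReal_ofReal hdx,
    ENNReal.toReal_ofReal hdy]

theorem pairwise_disjoint_cell2 (dx dy : ℝ) :
    Pairwise (Disjoint on fun p : ℤ × ℤ => cell2 dx dy p.1 p.2) := by
  have hIco (h : ℝ) : Pairwise (Disjoint on fun n : ℤ => Ico ((n : ℝ) * h) ((n + 1) * h)) := by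
    simpa only [zsmul_eq_mul, Int.cast_add, Int.cast_one] using pairwise_disjoint_Ico_zsmul h
  rintro ⟨i, j⟩ ⟨k, l⟩ hne
  rw [onFun, Set.disjoint_left]
  rintro p ⟨hpx, hpy⟩ ⟨hpx', hpy'⟩
  obtain hik | hjl : i ≠ k ∨ j ≠ l := by rw [← not_and_or]; simpa using hne
  · exact (hIco dx hik).le_bot ⟨hpx, hpx'⟩
  · exact (hIco dy hjl).le_bot ⟨hpy, hpy'⟩

theorem MeasureTheory.hasSum_measureReal_iUnion {α ι : Type*} [MeasurableSpace α] [Countable ι]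
    {μ : Measure α} [IsFiniteMeasure μ] {s : ι → Set α} (hs : ∀ i, MeasurableSet (s i))
    (hd : Pairwise (Disjoint on s)) :
    HasSum (fun i => μ.real (s i)) (μ.real (⋃ i, s i)) := by
  have hU : ∑' i, μ (s i) = μ (⋃ i, s i) := (measure_iUnion hd hs).symm
  have h := ENNReal.hasSum_toReal (hU ▸ measure_ne_top μ _)
  rwa [← ENNReal.tsum_toReal_eq fun i => measure_ne_top μ _, hU] at h

theorem norm_hatGrad_apply_le {d : ℕ} {W : EuclideanSpace ℝ (Fin d) → ℝ} {winf lam : ℝ}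
    (hW : PointyPotential d W winf lam) (x : EuclideanSpace ℝ (Fin d)) (c : Fin d) :
    ‖hatGrad d W x c‖ ≤ winf := by
  refine (PiLp.norm_apply_le _ c).trans ?_
  unfold hatGrad
  split_ifs with hx
  · simpa using hW.winf_nonneg
  · exact hW.gradBound x hx

theorem abs_DW_le {W : EuclideanSpace ℝ (Fin 2) → ℝ} {winf lam dx dy : ℝ}
    (hW : PointyPotential 2 W winf lam) (hdx : 0 ≤ dx) (hdy : 0 ≤ dy) (c : Fin 2) (i j k l : ℤ) :
    |DW W dx dy c i j k l| ≤ winf * (dx * dy) * (dx * dy) := by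
  have hfin (a b : ℤ) : volume (cell2 dx dy a b) < ⊤ := by
    simp [volume_cell2, ENNReal.mul_lt_top]
  have h := norm_setIntegral_le_of_norm_le_const (hfin k l) fun q _ =>
    norm_setIntegral_le_of_norm_le_const (hfin i j) fun p _ => norm_hatGrad_apply_le hW (p - q) c
  simpa only [DW, Real.norm_eq_abs, measureReal_cell2 hdx hdy] using h

theorem abs_tsum_tsum_mul_le {α β : Type*} {ρ D : α → β → ℝ} {C : ℝ} (hρ : ∀ a b, 0 ≤ ρ a b)
    (hs : Summable fun p : α × β => ρ p.1 p.2) (hD : ∀ a b, |D a b| ≤ C) :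
    |∑' a, ∑' b, ρ a b * D a b| ≤ C * ∑' p : α × β, ρ p.1 p.2 := by
  have hbd (p : α × β) : ‖ρ p.1 p.2 * D p.1 p.2‖ ≤ C * ρ p.1 p.2 := by
    rw [Real.norm_eq_abs, abs_mul, abs_of_nonneg (hρ _ _), mul_comm]
    exact mul_le_mul_of_nonneg_right (hD _ _) (hρ _ _)
  have hs' : Summable fun p : α × β => ρ p.1 p.2 * D p.1 p.2 :=
    .of_norm_bounded (hs.mul_left C) hbd
  rw [← hs'.tsum_prod' hs'.prod_factor, ← Real.norm_eq_abs, ← tsum_mul_left]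
  exact (norm_tsum_le_tsum_norm hs'.norm).trans (hs'.norm.tsum_le_tsum hbd (hs.mul_left C))

theorem Summable.hasSum_sub_comp_equiv {α G : Type*} [AddCommGroup G] [TopologicalSpace G]
    [IsTopologicalAddGroup G] {f : α → G} (hf : Summable f) (e : α ≃ α) :
    HasSum (fun x => f x - f (e x)) 0 := by
  simpa using hf.hasSum.sub (e.hasSum_iff.mpr hf.hasSum)

theorem abs_add_div_two_le {a b w : ℝ} (ha : |a| ≤ w) (hb : |b| ≤ w) : |(a + b) / 2| ≤ w := by
  rw [abs_le] at ha hb ⊢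
  constructor <;> linarith [ha.1, ha.2, hb.1, hb.2]

/-- The Lax–Friedrichs numerical flux with velocity `a` and viscosity `w` between the states
`u` (left) and `v` (right). -/
def numFlux (w a u v : ℝ) : ℝ :=
  a * ((u + v) / 2) - w / 2 * (v - u)

theorem abs_numFlux_le {w a u v : ℝ} (ha : |a| ≤ w) (hu : 0 ≤ u) (hv : 0 ≤ v) :
    |numFlux w a u v| ≤ w * (u + v) := by
  rw [abs_le] at ha ⊢
  unfold numFlux
  constructor <;> nlinarith [mul_nonneg hu (by linarith : 0 ≤ w - a),
    mul_nonneg hu (by linarith : 0 ≤ w + a), mul_nonneg hv (by linarith : 0 ≤ w - a),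
    mul_nonneg hv (by linarith : 0 ≤ w + a)]

theorem numFlux_update_nonneg {w lx ly A0 A1 B0 B1 r rE rW rN rS : ℝ} (hlx : 0 ≤ lx)
    (hly : 0 ≤ ly) (hCFL : w * (lx + ly) ≤ 1 / 2) (hA0 : |A0| ≤ w) (hA1 : |A1| ≤ w)
    (hB0 : |B0| ≤ w) (hB1 : |B1| ≤ w) (hr : 0 ≤ r) (hrE : 0 ≤ rE) (hrW : 0 ≤ rW)
    (hrN : 0 ≤ rN) (hrS : 0 ≤ rS) :
    0 ≤ r - lx * (numFlux w A1 r rE - numFlux w A0 rW r)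
      - ly * (numFlux w B1 r rN - numFlux w B0 rS r) := by
  rw [abs_le] at hA0 hA1 hB0 hB1
  have hcenter :
      0 ≤ 1 - lx * ((w + A1) / 2 + (w - A0) / 2) - ly * ((w + B1) / 2 + (w - B0) / 2) := by
    nlinarith [mul_le_mul_of_nonneg_left (by linarith : A1 - A0 ≤ 2 * w) hlx,
      mul_le_mul_of_nonneg_left (by linarith : B1 - B0 ≤ 2 * w) hly]
  have hsplit : r - lx * (numFlux w A1 r rE - numFlux w A0 rW r)
      - ly * (numFlux w B1 r rN - numFlux w B0 rS r) =
      r * (1 - lx * ((w + A1) / 2 + (w - A0) / 2) - ly * ((w + B1) / 2 + (w - B0) / 2))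
        + lx * ((w - A1) / 2 * rE + (w + A0) / 2 * rW)
        + ly * ((w - B1) / 2 * rN + (w + B0) / 2 * rS) := by
    simp only [numFlux]; ring
  rw [hsplit]
  have hE := mul_nonneg (by linarith : 0 ≤ (w - A1) / 2) hrE
  have hW := mul_nonneg (by linarith : 0 ≤ (w + A0) / 2) hrW
  have hN := mul_nonneg (by linarith : 0 ≤ (w - B1) / 2) hrN
  have hS := mul_nonneg (by linarith : 0 ≤ (w + B0) / 2) hrS
  exact add_nonneg (add_nonneg (mul_nonneg hr hcenter) (mul_nonneg hlx (add_nonneg hE hW)))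
    (mul_nonneg hly (add_nonneg hN hS))

section Scheme

variable {W : EuclideanSpace ℝ (Fin 2) → ℝ} {winf lam dx dy dt : ℝ} {ρ : ℤ → ℤ → ℝ}

/-- Cell values whose cell masses `area * ρ i j` form a sub-probability vector. -/
structure IsSubprobDensity (area : ℝ) (ρ : ℤ → ℤ → ℝ) : Prop where
  nonneg : ∀ i j, 0 ≤ ρ i j
  summable : Summable fun p : ℤ × ℤ => ρ p.1 p.2
  tsum_le : ∑' p : ℤ × ℤ, ρ p.1 p.2 ≤ 1 / area

theorem isSubprobDensity_cellAverage (hdx : 0 < dx) (hdy : 0 < dy)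
    (μ : Measure (EuclideanSpace ℝ (Fin 2))) [IsProbabilityMeasure μ] :
    IsSubprobDensity (dx * dy) fun i j => (μ (cell2 dx dy i j)).toReal / (dx * dy) := by
  have h := (hasSum_measureReal_iUnion (μ := μ)
    (fun p : ℤ × ℤ => measurableSet_cell2 dx dy p.1 p.2) (pairwise_disjoint_cell2 dx dy)).div_const
    (dx * dy)
  refine ⟨fun i j => by positivity, h.summable, h.tsum_eq.trans_le ?_⟩
  gcongr
  exact measureReal_le_one

theorem IsSubprobDensity.abs_discVel_le (hρ : IsSubprobDensity (dx * dy) ρ)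
    (hW : PointyPotential 2 W winf lam) (hdx : 0 < dx) (hdy : 0 < dy) (c : Fin 2) (i j : ℤ) :
    |discVel W dx dy ρ c i j| ≤ winf := by
  have harea : 0 < dx * dy := mul_pos hdx hdy
  have h := abs_tsum_tsum_mul_le hρ.nonneg hρ.summable fun k l =>
    abs_DW_le hW hdx.le hdy.le c i j k l
  have hw := hW.winf_nonneg
  rw [discVel, abs_mul, abs_of_pos (one_div_pos.2 harea)]
  calc 1 / (dx * dy) * |∑' k, ∑' l, ρ k l * DW W dx dy c i j k l|
      ≤ 1 / (dx * dy) * (winf * (dx * dy) * (dx * dy) * (1 / (dx * dy))) := by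
        gcongr
        exact h.trans (by gcongr; exact hρ.tsum_le)
    _ = winf := by field_simp

/-- The flux through the face `x = x_{i+1}`:
`a_x{}_{i+1/2,j} ρ_{i+1/2,j} - (w_∞/2) (ρ_{i+1,j} - ρ_{ij})`. -/
def fluxX (W : EuclideanSpace ℝ (Fin 2) → ℝ) (winf dx dy : ℝ) (ρ : ℤ → ℤ → ℝ) (i j : ℤ) : ℝ :=
  numFlux winf ((discVel W dx dy ρ 0 i j + discVel W dx dy ρ 0 (i + 1) j) / 2)
    (ρ i j) (ρ (i + 1) j)

def fluxY (W : EuclideanSpace ℝ (Fin 2) → ℝ) (winf dx dy : ℝ) (ρ : ℤ → ℤ → ℝ) (i j : ℤ) : ℝ :=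
  numFlux winf ((discVel W dx dy ρ 1 i j + discVel W dx dy ρ 1 i (j + 1)) / 2)
    (ρ i j) (ρ i (j + 1))

theorem fvStep_eq_sub_flux (i j : ℤ) :
    fvStep W winf dx dy dt ρ i j = ρ i j
      - dt / dx * (fluxX W winf dx dy ρ i j - fluxX W winf dx dy ρ (i - 1) j)
      - dt / dy * (fluxY W winf dx dy ρ i j - fluxY W winf dx dy ρ i (j - 1)) := by
  simp only [fvStep, fluxX, fluxY, numFlux, sub_add_cancel]
  ring

theorem IsSubprobDensity.fvStep_nonneg (hρ : IsSubprobDensity (dx * dy) ρ)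
    (hW : PointyPotential 2 W winf lam) (hdx : 0 < dx) (hdy : 0 < dy) (hdt : 0 ≤ dt)
    (hCFL : winf * (1 / dx + 1 / dy) * dt ≤ 1 / 2) (i j : ℤ) :
    0 ≤ fvStep W winf dx dy dt ρ i j := by
  have ha := hρ.abs_discVel_le hW hdx hdy
  rw [fvStep_eq_sub_flux]
  simp only [fluxX, fluxY, sub_add_cancel]
  exact numFlux_update_nonneg (by positivity) (by positivity) (by convert hCFL using 1; ring)
    (abs_add_div_two_le (ha 0 _ _) (ha 0 _ _)) (abs_add_div_two_le (ha 0 _ _) (ha 0 _ _))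
    (abs_add_div_two_le (ha 1 _ _) (ha 1 _ _)) (abs_add_div_two_le (ha 1 _ _) (ha 1 _ _))
    (hρ.nonneg _ _) (hρ.nonneg _ _) (hρ.nonneg _ _) (hρ.nonneg _ _) (hρ.nonneg _ _)

theorem isSubprobDensity_fvStep (hρ : IsSubprobDensity (dx * dy) ρ)
    (hW : PointyPotential 2 W winf lam) (hdx : 0 < dx) (hdy : 0 < dy) (hdt : 0 ≤ dt)
    (hCFL : winf * (1 / dx + 1 / dy) * dt ≤ 1 / 2) :
    IsSubprobDensity (dx * dy) (fvStep W winf dx dy dt ρ) := by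
  have ha := hρ.abs_discVel_le hW hdx hdy
  have hshift (e : ℤ × ℤ ≃ ℤ × ℤ) : Summable fun p => ρ (e p).1 (e p).2 :=
    e.summable_iff.mpr hρ.summable
  have hFx : Summable fun p : ℤ × ℤ => fluxX W winf dx dy ρ p.1 p.2 :=
    .of_norm_bounded ((hρ.summable.add
      (hshift ((Equiv.addRight 1).prodCongr (Equiv.refl ℤ)))).mul_left winf) fun p =>
      abs_numFlux_le (abs_add_div_two_le (ha 0 _ _) (ha 0 _ _)) (hρ.nonneg _ _) (hρ.nonneg _ _)
  have hFy : Summable fun p : ℤ × ℤ => fluxY W winf dx dy ρ p.1 p.2 :=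
    .of_norm_bounded ((hρ.summable.add
      (hshift ((Equiv.refl ℤ).prodCongr (Equiv.addRight 1)))).mul_left winf) fun p =>
      abs_numFlux_le (abs_add_div_two_le (ha 1 _ _) (ha 1 _ _)) (hρ.nonneg _ _) (hρ.nonneg _ _)
  have hmass : HasSum (fun p : ℤ × ℤ => fvStep W winf dx dy dt ρ p.1 p.2)
      (∑' p : ℤ × ℤ, ρ p.1 p.2) := by
    have h := (hρ.summable.hasSum.sub
      ((hFx.hasSum_sub_comp_equiv ((Equiv.subRight 1).prodCongr (Equiv.refl ℤ))).mul_left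
        (dt / dx))).sub
      ((hFy.hasSum_sub_comp_equiv ((Equiv.refl ℤ).prodCongr (Equiv.subRight 1))).mul_left
        (dt / dy))
    simpa only [fvStep_eq_sub_flux, Equiv.prodCongr_apply, Prod.map_fst, Prod.map_snd,
      Equiv.subRight_apply, Equiv.refl_apply, mul_zero, sub_zero] using h
  exact ⟨hρ.fvStep_nonneg hW hdx hdy hdt hCFL, hmass.summable, hmass.tsum_eq.trans_le hρ.tsum_le⟩

end Scheme

/-- CFL / positivity: under the CFL condition
`w_∞ (1/Δx + 1/Δy) Δt ≤ 1/2`, the finite volume scheme preserves nonnegativity and the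
discrete velocities are bounded by `w_∞`. -/
theorem fv_scheme_positivity
    (W : EuclideanSpace ℝ (Fin 2) → ℝ) (winf lam : ℝ)
    (hW : PointyPotential 2 W winf lam)
    (ρini : Measure (EuclideanSpace ℝ (Fin 2))) (hini : MemP2 ρini)
    (dx dy dt : ℝ) (hdx : 0 < dx) (hdy : 0 < dy) (hdt : 0 < dt)
    (hCFL : winf * (1 / dx + 1 / dy) * dt ≤ 1 / 2) :
    ∀ (n : ℕ) (i j : ℤ),
      0 ≤ fvRho W winf dx dy dt ρini n i j ∧
      |discVel W dx dy (fvRho W winf dx dy dt ρini n) 0 i j| ≤ winf ∧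
      |discVel W dx dy (fvRho W winf dx dy dt ρini n) 1 i j| ≤ winf := by
  have hinv (n : ℕ) : IsSubprobDensity (dx * dy) (fvRho W winf dx dy dt ρini n) := by
    induction n with
    | zero =>
      have := hini.1
      exact isSubprobDensity_cellAverage hdx hdy ρini
    | succ n ih => exact isSubprobDensity_fvStep ih hW hdx hdy hdt.le hCFL
  intro n i j
  exact ⟨(hinv n).nonneg i j, (hinv n).abs_discVel_le hW hdx hdy 0 i j,
    (hinv n).abs_discVel_le hW hdx hdy 1 i j⟩
end
end
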